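/- The vector-function f = (f₀, f₁) with f₀ a nonzero constant and f₁(q) = -μ f₀ / (ε(q/2) + ε(q)) satisfies f₁ ∈ L¹(T³) but f₁ ∉ L²(T³). -/

import Mathlib

/-!
On `T³` the elementary bounds `1 - cos x ≥ 2x²/π²` (for `|x| ≤ π`) and `1 - cos x ≤ x²/2` make
`ε(q/2) + ε(q)` comparable to `‖q‖²`, so `‖f₁ q‖ ≍ ‖q‖⁻²`. In polar coordinates on `ℝ³`,
`‖q‖⁻²` is integrable near the origin while `‖q‖⁻⁴` is not.
-/

open MeasureTheory Real Filter

noncomputable def eps (k : EuclideanSpace ℝ (Fin 3)) : ℝ := ∑ i, (1 - Real.cos (k i))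

noncomputable def w1 (k p : EuclideanSpace ℝ (Fin 3)) : ℝ :=
  eps k + eps ((1 / 2 : ℝ) • (k + p)) + eps p

def T3 : Set (EuclideanSpace ℝ (Fin 3)) := {k | ∀ i, k i ∈ Set.Ioc (-Real.pi) Real.pi}

noncomputable def pibar : EuclideanSpace ℝ (Fin 3) := WithLp.toLp 2 (fun _ => Real.pi)

open Metric

theorem not_integrableOn_ball_norm_rpow_neg {E : Type*} [NormedAddCommGroup E] [NormedSpace ℝ E]
    [Nontrivial E] [FiniteDimensional ℝ E] [MeasurableSpace E] [BorelSpace E]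
    {μ : Measure E} [μ.IsAddHaarMeasure] {α r : ℝ} (hα : Module.finrank ℝ E ≤ α) (hr : 0 < r) :
    ¬ IntegrableOn (fun x : E => ‖x‖ ^ (-α)) (ball 0 r) μ := by
  have hd : 1 ≤ Module.finrank ℝ E := Module.finrank_pos
  rw [integrableOn_fun_norm_addHaar μ (f := fun y => y ^ (-α)),
    ← integrableOn_congr_fun (f := fun y : ℝ => y ^ ((Module.finrank ℝ E : ℝ) - 1 - α))
      (fun y hy => by
        simp only [smul_eq_mul]
        rw [← Real.rpow_natCast, ← Real.rpow_add hy.1, Nat.cast_sub hd, Nat.cast_one]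
        ring_nf) measurableSet_Ioo,
    intervalIntegral.integrableOn_Ioo_rpow_iff hr]
  linarith

lemma eps_nonneg (k : EuclideanSpace ℝ (Fin 3)) : 0 ≤ eps k :=
  Finset.sum_nonneg fun i _ => by linarith [Real.cos_le_one (k i)]

lemma eps_le_norm_sq (k : EuclideanSpace ℝ (Fin 3)) : eps k ≤ ‖k‖ ^ 2 / 2 := by
  rw [EuclideanSpace.real_norm_sq_eq, Finset.sum_div]
  exact Finset.sum_le_sum fun i _ => by linarith [Real.one_sub_sq_div_two_le_cos (x := k i)]

lemma mul_norm_sq_le_eps {k : EuclideanSpace ℝ (Fin 3)} (hk : k ∈ T3) :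
    2 / π ^ 2 * ‖k‖ ^ 2 ≤ eps k := by
  rw [EuclideanSpace.real_norm_sq_eq, Finset.mul_sum]
  exact Finset.sum_le_sum fun i _ => by
    linarith [Real.cos_le_one_sub_mul_cos_sq (abs_le.mpr ⟨(hk i).1.le, (hk i).2⟩)]

lemma continuous_eps : Continuous eps := by unfold eps; fun_prop

lemma measurableSet_T3 : MeasurableSet T3 := by
  have : T3 = ⋂ i, (fun q : EuclideanSpace ℝ (Fin 3) => q i) ⁻¹' Set.Ioc (-π) π := by
    ext q; simp [T3]
  rw [this]
  exact MeasurableSet.iInter fun i => measurableSet_Ioc.preimage (by fun_prop)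

lemma ball_subset_T3 : ball 0 π ⊆ T3 := fun q hq i => by
  have hi : |q i| < π := (PiLp.norm_apply_le q i).trans_lt (mem_ball_zero_iff.mp hq)
  exact ⟨(abs_lt.mp hi).1, (abs_lt.mp hi).2.le⟩

lemma T3_subset_ball : T3 ⊆ ball 0 6 := fun q hq => by
  have hsq : ‖q‖ ^ 2 ≤ 3 * π ^ 2 := by
    rw [EuclideanSpace.real_norm_sq_eq, Fin.sum_univ_three]
    have h := fun i => sq_le_sq' (hq i).1.le (hq i).2
    linarith [h 0, h 1, h 2]
  rw [mem_ball_zero_iff]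
  nlinarith [norm_nonneg q, pi_lt_d2, pi_pos]

noncomputable def epsSum (q : EuclideanSpace ℝ (Fin 3)) : ℝ := eps ((1 / 2 : ℝ) • q) + eps q

lemma continuous_epsSum : Continuous epsSum :=
  (continuous_eps.comp (continuous_const_smul _)).add continuous_eps

lemma epsSum_nonneg (q : EuclideanSpace ℝ (Fin 3)) : 0 ≤ epsSum q :=
  add_nonneg (eps_nonneg _) (eps_nonneg _)

lemma epsSum_le_norm_sq (q : EuclideanSpace ℝ (Fin 3)) : epsSum q ≤ ‖q‖ ^ 2 := by
  have h := eps_le_norm_sq ((1 / 2 : ℝ) • q)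
  rw [norm_smul, mul_pow, Real.norm_of_nonneg (by norm_num)] at h
  unfold epsSum
  linarith [eps_le_norm_sq q, sq_nonneg ‖q‖]

lemma mul_norm_sq_le_epsSum {q : EuclideanSpace ℝ (Fin 3)} (hq : q ∈ T3) :
    2 / π ^ 2 * ‖q‖ ^ 2 ≤ epsSum q :=
  (mul_norm_sq_le_eps hq).trans (le_add_of_nonneg_left (eps_nonneg _))

-- With `c / 0 = 0` and `0 ^ (-2 : ℝ) = 0`, both bounds below also hold where `epsSum q = 0`.
lemma norm_div_epsSum_le (c : ℂ) {q : EuclideanSpace ℝ (Fin 3)} (hq : q ∈ T3) :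
    ‖c / (epsSum q : ℂ)‖ ≤ π ^ 2 / 2 * ‖c‖ * ‖q‖ ^ (-2 : ℝ) := by
  rcases (epsSum_nonneg q).eq_or_lt with h0 | hpos
  · rw [← h0]; simp only [Complex.ofReal_zero, div_zero, norm_zero]; positivity
  have hq0 : q ≠ 0 := by rintro rfl; simp [epsSum, eps] at hpos
  rw [norm_div, Complex.norm_real, Real.norm_of_nonneg hpos.le, Real.rpow_neg (norm_nonneg q),
    Real.rpow_two, ← div_eq_mul_inv]
  calc ‖c‖ / epsSum q ≤ ‖c‖ / (2 / π ^ 2 * ‖q‖ ^ 2) :=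
        div_le_div_of_nonneg_left (norm_nonneg c) (by positivity) (mul_norm_sq_le_epsSum hq)
    _ = π ^ 2 / 2 * ‖c‖ / ‖q‖ ^ 2 := by field_simp

lemma norm_mul_rpow_le_norm_div_epsSum (c : ℂ) {q : EuclideanSpace ℝ (Fin 3)} (hq : q ∈ T3) :
    ‖c‖ * ‖q‖ ^ (-2 : ℝ) ≤ ‖c / (epsSum q : ℂ)‖ := by
  rcases eq_or_ne q 0 with rfl | hq0
  · simp only [norm_zero, Real.zero_rpow (by norm_num : (-2 : ℝ) ≠ 0), mul_zero]
    exact norm_nonneg _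
  have hpos : 0 < epsSum q := lt_of_lt_of_le (by positivity) (mul_norm_sq_le_epsSum hq)
  rw [norm_div, Complex.norm_real, Real.norm_of_nonneg hpos.le, Real.rpow_neg (norm_nonneg q),
    Real.rpow_two, ← div_eq_mul_inv]
  exact div_le_div_of_nonneg_left (norm_nonneg c) hpos (epsSum_le_norm_sq q)

theorem integrableOn_div_epsSum (c : ℂ) :
    IntegrableOn (fun q => c / (epsSum q : ℂ)) T3 := by
  have hmeas : Measurable (fun q => c / (epsSum q : ℂ)) :=
    measurable_const.div (Complex.measurable_ofReal.comp continuous_epsSum.measurable)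
  have hball : IntegrableOn (T3.indicator fun q => c / (epsSum q : ℂ)) (ball 0 6) := by
    refine integrableOn_ball_of_norm_le_rpow (C := π ^ 2 / 2 * ‖c‖) (α := 2) (by simp)
      (by simp; norm_num) (ae_of_all _ fun q => ?_)
      (hmeas.indicator measurableSet_T3).aestronglyMeasurable
    by_cases hq : q ∈ T3
    · simpa [Set.indicator_of_mem hq] using norm_div_epsSum_le c hq
    · rw [Set.indicator_of_notMem hq, norm_zero]; positivity
  exact (hball.mono_set T3_subset_ball).congr_fun (fun q hq => Set.indicator_of_mem hq _)
    measurableSet_T3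

theorem not_memLp_two_div_epsSum {c : ℂ} (hc : c ≠ 0) :
    ¬ MemLp (fun q => c / (epsSum q : ℂ)) 2 (volume.restrict T3) := by
  intro hmem
  have hsq : IntegrableOn (fun q => ‖c / (epsSum q : ℂ)‖ ^ 2) (ball 0 π) :=
    IntegrableOn.mono_set ((memLp_two_iff_integrable_sq_norm hmem.1).mp hmem) ball_subset_T3
  refine not_integrableOn_ball_norm_rpow_neg (α := 4) (by norm_num) pi_pos
    ((hsq.const_mul (‖c‖ ^ 2)⁻¹).mono' (measurable_norm.pow_const _).aestronglyMeasurable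
      ((ae_restrict_mem measurableSet_ball).mono fun q hq => ?_))
  have hsq_rpow : ‖q‖ ^ (-4 : ℝ) = (‖q‖ ^ (-2 : ℝ)) ^ 2 := by
    rw [← Real.rpow_natCast, ← Real.rpow_mul (norm_nonneg q)]; norm_num
  rw [Real.norm_of_nonneg (by positivity), le_inv_mul_iff₀ (by positivity), hsq_rpow, ← mul_pow]
  exact pow_le_pow_left₀ (by positivity) (norm_mul_rpow_le_norm_div_epsSum c (ball_subset_T3 hq)) 2

theorem stmt6 (μ : ℝ) (hμ : 0 < μ) (f₀ : ℂ) (hf₀ : f₀ ≠ 0) :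
    MeasureTheory.Integrable
      (fun q : EuclideanSpace ℝ (Fin 3) =>
        -(↑μ * f₀) / ((eps ((1 / 2 : ℝ) • q) + eps q : ℝ) : ℂ))
      (MeasureTheory.volume.restrict T3) ∧
    ¬ MeasureTheory.MemLp
      (fun q : EuclideanSpace ℝ (Fin 3) =>
        -(↑μ * f₀) / ((eps ((1 / 2 : ℝ) • q) + eps q : ℝ) : ℂ))
      2 (MeasureTheory.volume.restrict T3) :=
  ⟨integrableOn_div_epsSum _,
    not_memLp_two_div_epsSum (neg_ne_zero.mpr (mul_ne_zero (by exact_mod_cast hμ.ne') hf₀))⟩
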